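/- Let ν ≥ 0 and let Ω ⊆ [0,∞) be a measurable set. Then Ω is thick if and only if Ω is μ_ν-thick. -/

import Mathlib

open MeasureTheory Set

noncomputable section

/-- A measurable set `E ⊆ [0,∞)` is thick: there are `γ ∈ (0,1]` and `L > 0` with
`|E ∩ [x, x+L]| ≥ γ·L` for every `x ≥ 0`. -/
def IsThickSet (E : Set ℝ) : Prop :=
  ∃ γ L : ℝ, γ ∈ Ioc (0 : ℝ) 1 ∧ 0 < L ∧
    ∀ x : ℝ, 0 ≤ x → ENNReal.ofReal (γ * L) ≤ volume (E ∩ Icc x (x + L))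

/-- A measurable set `Ω ⊆ [0,∞)` is `μ_ν`-thick: there are `r ∈ (0,1]` and `L > 0` with
`∫_{Ω∩[x,x+L]} t^{2ν+1} dt ≥ r·∫_x^{x+L} t^{2ν+1} dt` for every `x ≥ 0`. -/
def IsMuThick (ν : ℝ) (Ω : Set ℝ) : Prop :=
  ∃ r L : ℝ, r ∈ Ioc (0 : ℝ) 1 ∧ 0 < L ∧
    ∀ x : ℝ, 0 ≤ x →
      r * (∫ t in Icc x (x + L), t ^ (2 * ν + 1)) ≤
        ∫ t in Ω ∩ Icc x (x + L), t ^ (2 * ν + 1)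

namespace ThickAux

lemma cont_rpow (α : ℝ) (hα : 0 ≤ α) : Continuous fun t : ℝ => t ^ α :=
  Real.continuous_rpow_const hα

lemma integrableOn_sub {α : ℝ} (hα : 0 ≤ α) {S : Set ℝ} {a b : ℝ} (hsub : S ⊆ Icc a b) :
    IntegrableOn (fun t : ℝ => t ^ α) S volume :=
  ((cont_rpow α hα).integrableOn_Icc).mono_set hsub

lemma vol_fin {S : Set ℝ} {a b : ℝ} (hsub : S ⊆ Icc a b) : volume S < ⊤ :=
  lt_of_le_of_lt (measure_mono hsub) (by rw [Real.volume_Icc]; exact ENNReal.ofReal_lt_top)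

/-- Lower bound: on `S ⊆ [a,b]` with `0 ≤ a`, the integrand is at least `a^α`. -/
lemma lb {α : ℝ} (hα : 0 ≤ α) {S : Set ℝ} (hS : MeasurableSet S) {a b : ℝ}
    (hsub : S ⊆ Icc a b) (ha : 0 ≤ a) :
    a ^ α * (volume S).toReal ≤ ∫ t in S, t ^ α := by
  have h := setIntegral_mono_on
    (integrableOn_const (vol_fin hsub).ne)
    (integrableOn_sub hα hsub) hS
    (fun t ht => Real.rpow_le_rpow ha (hsub ht).1 hα)
  rwa [setIntegral_const, smul_eq_mul, mul_comm] at h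

/-- Upper bound: on `S ⊆ [a,b]` with `0 ≤ a`, the integrand is at most `b^α`. -/
lemma ub {α : ℝ} (hα : 0 ≤ α) {S : Set ℝ} (hS : MeasurableSet S) {a b : ℝ}
    (hsub : S ⊆ Icc a b) (ha : 0 ≤ a) :
    (∫ t in S, t ^ α) ≤ b ^ α * (volume S).toReal := by
  have h := setIntegral_mono_on
    (integrableOn_sub hα hsub)
    (integrableOn_const (vol_fin hsub).ne) hS
    (fun t ht => Real.rpow_le_rpow (ha.trans (hsub ht).1) (hsub ht).2 hα)
  rwa [setIntegral_const, smul_eq_mul, mul_comm] at h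

lemma mono_set {α : ℝ} (hα : 0 ≤ α) {S T : Set ℝ} (hT : MeasurableSet T)
    {a b : ℝ} (hTsub : T ⊆ Icc a b) (ha : 0 ≤ a) (hST : S ⊆ T) :
    (∫ t in S, t ^ α) ≤ ∫ t in T, t ^ α := by
  refine setIntegral_mono_set (integrableOn_sub hα hTsub) ?_ hST.eventuallyLE
  filter_upwards [ae_restrict_mem hT] with t ht
  exact Real.rpow_nonneg (ha.trans (hTsub ht).1) α

end ThickAux

theorem thick_iff_muThick
    (ν : ℝ) (hν : 0 ≤ ν) (Ω : Set ℝ) (hΩmeas : MeasurableSet Ω) (hΩ : Ω ⊆ Ici 0) :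
    IsThickSet Ω ↔ IsMuThick ν Ω := by
  set α : ℝ := 2 * ν + 1 with hαdef
  have hα : 0 ≤ α := by positivity
  have hcpos : (0:ℝ) < (1/2 : ℝ) ^ (α + 1) :=
    Real.rpow_pos_of_pos (by norm_num) _
  have hcle : ((1/2 : ℝ)) ^ (α + 1) ≤ 1 :=
    Real.rpow_le_one (by norm_num) (by norm_num) (by linarith)
  have hcsplit : ((1/2 : ℝ)) ^ (α + 1) = (1/2 : ℝ) ^ α * (1/2 : ℝ) := by
    rw [Real.rpow_add (by norm_num), Real.rpow_one]
  constructor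
  · rintro ⟨γ, L, ⟨hγ0, hγ1⟩, hL, hthick⟩
    refine ⟨γ * (1/2 : ℝ) ^ (α + 1), 2 * L, ⟨by positivity, ?_⟩, by linarith, ?_⟩
    · calc γ * (1/2:ℝ) ^ (α+1) ≤ 1 * 1 := by
            apply mul_le_mul hγ1 hcle hcpos.le zero_le_one
          _ = 1 := by norm_num
    intro x hx
    -- sets
    set S : Set ℝ := Ω ∩ Icc (x + L) (x + L + L) with hSdef
    set T : Set ℝ := Ω ∩ Icc x (x + 2 * L) with hTdef
    have hSmeas : MeasurableSet S := hΩmeas.inter measurableSet_Icc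
    have hTmeas : MeasurableSet T := hΩmeas.inter measurableSet_Icc
    have hSsub : S ⊆ Icc (x + L) (x + L + L) := inter_subset_right
    have hTsub : T ⊆ Icc x (x + 2 * L) := inter_subset_right
    have hST : S ⊆ T := by
      rintro t ⟨htΩ, ht1, ht2⟩
      exact ⟨htΩ, by constructor <;> linarith⟩
    -- measure lower bound for S
    have hvolS : γ * L ≤ (volume S).toReal := by
      have h := hthick (x + L) (by linarith)
      exact (ENNReal.ofReal_le_iff_le_toReal (ThickAux.vol_fin hSsub).ne).1 h
    -- integral over T lower bound
    have hJ : γ * L * (x + L) ^ α ≤ ∫ t in T, t ^ α := by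
      have h1 : (x + L) ^ α * (γ * L) ≤ (x + L) ^ α * (volume S).toReal := by
        apply mul_le_mul_of_nonneg_left hvolS (Real.rpow_nonneg (by linarith) α)
      have h2 := ThickAux.lb hα hSmeas hSsub (by linarith : (0:ℝ) ≤ x + L)
      have h3 := ThickAux.mono_set hα hTmeas hTsub hx hST
      calc γ * L * (x + L) ^ α = (x + L) ^ α * (γ * L) := by ring
        _ ≤ (x + L) ^ α * (volume S).toReal := h1
        _ ≤ ∫ t in S, t ^ α := h2
        _ ≤ ∫ t in T, t ^ α := h3
    -- integral over Icc upper bound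
    have hI : (∫ t in Icc x (x + 2*L), t ^ α) ≤ (x + 2*L) ^ α * (2*L) := by
      have h := ThickAux.ub hα measurableSet_Icc (le_refl (Icc x (x + 2*L))) hx
      rwa [Real.volume_Icc, ENNReal.toReal_ofReal (by linarith),
        (by ring : x + 2*L - x = 2*L)] at h
    -- the key pointwise inequality
    have hkey : (1/2 : ℝ) ^ (α+1) * ((x + 2*L) ^ α * (2*L)) ≤ L * (x + L) ^ α := by
      have h1 : ((1/2 : ℝ) * (x + 2*L)) ^ α ≤ (x + L) ^ α :=
        Real.rpow_le_rpow (by linarith) (by linarith) hα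
      rw [Real.mul_rpow (by norm_num) (by linarith)] at h1
      calc (1/2 : ℝ) ^ (α+1) * ((x + 2*L) ^ α * (2*L))
          = ((1/2:ℝ) ^ α * (x + 2*L) ^ α) * L := by rw [hcsplit]; ring
        _ ≤ (x + L) ^ α * L := mul_le_mul_of_nonneg_right h1 hL.le
        _ = L * (x + L) ^ α := by ring
    calc γ * (1/2:ℝ) ^ (α+1) * ∫ t in Icc x (x + 2*L), t ^ α
        ≤ γ * ((1/2:ℝ) ^ (α+1) * ((x + 2*L) ^ α * (2*L))) := by
          rw [mul_assoc]
          apply mul_le_mul_of_nonneg_left _ hγ0.le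
          apply mul_le_mul_of_nonneg_left hI hcpos.le
      _ ≤ γ * (L * (x + L) ^ α) := mul_le_mul_of_nonneg_left hkey hγ0.le
      _ = γ * L * (x + L) ^ α := by ring
      _ ≤ ∫ t in T, t ^ α := hJ
  · rintro ⟨r, L, ⟨hr0, hr1⟩, hL, hmu⟩
    refine ⟨r * (1/2 : ℝ) ^ (α + 1), L, ⟨by positivity, ?_⟩, hL, ?_⟩
    · calc r * (1/2:ℝ) ^ (α+1) ≤ 1 * 1 := by
            apply mul_le_mul hr1 hcle hcpos.le zero_le_one
          _ = 1 := by norm_num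
    intro x hx
    set T : Set ℝ := Ω ∩ Icc x (x + L) with hTdef
    have hTmeas : MeasurableSet T := hΩmeas.inter measurableSet_Icc
    have hTsub : T ⊆ Icc x (x + L) := inter_subset_right
    have hxL : (0:ℝ) < x + L := by linarith
    -- upper bound for integral over T
    have hJ : (∫ t in T, t ^ α) ≤ (x + L) ^ α * (volume T).toReal :=
      ThickAux.ub hα hTmeas hTsub hx
    -- lower bound for integral over the whole interval
    have hI : L/2 * (x + L/2) ^ α ≤ ∫ t in Icc x (x + L), t ^ α := by
      have hsub2 : Icc (x + L/2) (x + L) ⊆ Icc x (x + L) := by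
        apply Icc_subset_Icc (by linarith) le_rfl
      have h1 := ThickAux.lb hα measurableSet_Icc
        (le_refl (Icc (x + L/2) (x + L))) (by linarith : (0:ℝ) ≤ x + L/2)
      rw [Real.volume_Icc, ENNReal.toReal_ofReal (by linarith),
        (by ring : x + L - (x + L/2) = L/2)] at h1
      have h2 := ThickAux.mono_set hα measurableSet_Icc
        (le_refl (Icc x (x + L))) hx hsub2
      calc L/2 * (x + L/2) ^ α = (x + L/2) ^ α * (L/2) := by ring
        _ ≤ ∫ t in Icc (x + L/2) (x + L), t ^ α := h1
        _ ≤ ∫ t in Icc x (x + L), t ^ α := h2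
    -- key pointwise inequality
    have hkey : (1/2:ℝ) ^ (α+1) * L * (x + L) ^ α ≤ L/2 * (x + L/2) ^ α := by
      have h1 : ((1/2 : ℝ) * (x + L)) ^ α ≤ (x + L/2) ^ α :=
        Real.rpow_le_rpow (by linarith) (by linarith) hα
      rw [Real.mul_rpow (by norm_num) hxL.le] at h1
      calc (1/2:ℝ) ^ (α+1) * L * (x + L) ^ α
          = ((1/2:ℝ) ^ α * (x + L) ^ α) * (L/2) := by rw [hcsplit]; ring
        _ ≤ (x + L/2) ^ α * (L/2) := mul_le_mul_of_nonneg_right h1 (by linarith)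
        _ = L/2 * (x + L/2) ^ α := by ring
    -- combine: γ L (x+L)^α ≤ (vol T).toReal (x+L)^α
    have hmain : r * (1/2:ℝ) ^ (α+1) * L * (x + L) ^ α
        ≤ (volume T).toReal * (x + L) ^ α := by
      calc r * (1/2:ℝ) ^ (α+1) * L * (x + L) ^ α
          = r * ((1/2:ℝ) ^ (α+1) * L * (x + L) ^ α) := by ring
        _ ≤ r * (L/2 * (x + L/2) ^ α) := mul_le_mul_of_nonneg_left hkey hr0.le
        _ ≤ r * ∫ t in Icc x (x + L), t ^ α := mul_le_mul_of_nonneg_left hI hr0.le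
        _ ≤ ∫ t in T, t ^ α := hmu x hx
        _ ≤ (x + L) ^ α * (volume T).toReal := hJ
        _ = (volume T).toReal * (x + L) ^ α := by ring
    have hfinal : r * (1/2:ℝ) ^ (α+1) * L ≤ (volume T).toReal :=
      le_of_mul_le_mul_right hmain (Real.rpow_pos_of_pos hxL α)
    exact ENNReal.ofReal_le_of_le_toReal hfinal
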